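/- arXiv:1903.10248 — 2 statements merged into one kernel-verified Lean document; each statement's English description precedes it below -/
import Mathlib

section
/- Let A_1 be the first Weyl algebra and σ_0 the automorphism of A_1 determined by σ_0(∂) = -x and σ_0(x) = ∂. For λ ∈ ℂ \ ℤ, the twist of the module U(λ) by σ_0 (i.e. the module with same underlying space and action a·v := σ_0(a)v) is isomorphic to U(-λ). -/
/-!
The isomorphism sends `e_n` to `Γ(λ + n + 1) e_{-n-1}`. Reflecting the index `n ↦ -n - 1`
exchanges the shifts `x` and `∂`, and both intertwining relations reduce to the single
recursion `c (n + 1) = (λ + n + 1) c n` for the weights, which `Γ(s + 1) = s Γ(s)` provides.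
Since `λ ∉ ℤ`, `λ + n + 1` is never a pole of `Γ`, so the weights are nonzero and the map
is invertible.
-/

/-- The operator `x`: `x · e_n = e_{n+1}` on `U(λ)`, basis `e_n ↔ x^{λ+n}`. -/
noncomputable def weylX : (ℤ →₀ ℂ) →ₗ[ℂ] (ℤ →₀ ℂ) :=
  Finsupp.lmapDomain ℂ ℂ (fun n => n + 1)

/-- The operator `∂`: `∂ · e_n = (λ + n) e_{n-1}`. -/
noncomputable def weylD (l : ℂ) : (ℤ →₀ ℂ) →ₗ[ℂ] (ℤ →₀ ℂ) :=
  Finsupp.lsum ℂ (fun n => (l + (n : ℂ)) • Finsupp.lsingle (n - 1))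

open Finsupp

lemma weylX_single (n : ℤ) (a : ℂ) : weylX (single n a) = single (n + 1) a := by
  simp only [weylX, lmapDomain_apply, mapDomain_single]

lemma weylD_single (l : ℂ) (n : ℤ) (a : ℂ) :
    weylD l (single n a) = single (n - 1) ((l + n) * a) := by
  simp only [weylD, lsum_single, LinearMap.smul_apply, lsingle_apply, smul_single, smul_eq_mul]

section WeightedReflection

variable {R : Type*} [CommRing R]

noncomputable def weightedReflection (c : ℤ → R) : (ℤ →₀ R) →ₗ[R] (ℤ →₀ R) :=
  lsum R fun n => c n • lsingle (-n - 1)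

lemma weightedReflection_single (c : ℤ → R) (n : ℤ) (a : R) :
    weightedReflection c (single n a) = single (-n - 1) (c n * a) := by
  simp only [weightedReflection, lsum_single, LinearMap.smul_apply, lsingle_apply, smul_single,
    smul_eq_mul]

lemma weightedReflection_comp_weightedReflection {c d : ℤ → R}
    (hcd : ∀ n, d (-n - 1) * c n = 1) :
    weightedReflection d ∘ₗ weightedReflection c = LinearMap.id := by
  refine lhom_ext fun n a => ?_
  rw [LinearMap.comp_apply, weightedReflection_single, weightedReflection_single,
    show -(-n - 1) - 1 = n by ring, ← mul_assoc, hcd, one_mul, LinearMap.id_apply]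

noncomputable def weightedReflectionEquiv (c : ℤ → Rˣ) : (ℤ →₀ R) ≃ₗ[R] (ℤ →₀ R) :=
  LinearEquiv.ofLinearMap (weightedReflection fun n => c n)
    (weightedReflection fun n => ↑(c (-n - 1))⁻¹)
    (weightedReflection_comp_weightedReflection fun n => Units.mul_inv (c (-n - 1)))
    (weightedReflection_comp_weightedReflection fun n => by
      rw [show -(-n - 1) - 1 = n by ring, Units.inv_mul])

end WeightedReflection

section Intertwining

variable {l : ℂ} {c : ℤ → ℂ}

lemma weightedReflection_comp_weylD (hc : ∀ n : ℤ, c (n + 1) = (l + n + 1) * c n) :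
    weightedReflection c ∘ₗ weylD l = weylX ∘ₗ weightedReflection c := by
  refine lhom_ext fun n a => ?_
  have hcn : c n = (l + n) * c (n - 1) := by
    simpa [add_assoc] using hc (n - 1)
  simp only [LinearMap.comp_apply, weylD_single, weightedReflection_single, weylX_single]
  rw [show -(n - 1) - 1 = -n - 1 + 1 by ring, hcn, mul_left_comm, mul_assoc]

lemma weightedReflection_comp_neg_weylX (hc : ∀ n : ℤ, c (n + 1) = (l + n + 1) * c n) :
    weightedReflection c ∘ₗ (-weylX) = weylD (-l) ∘ₗ weightedReflection c := by
  refine lhom_ext fun n a => ?_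
  simp only [LinearMap.comp_apply, LinearMap.neg_apply, weylX_single,
    weightedReflection_single, weylD_single, ← single_neg, hc]
  congr 1
  · ring
  · push_cast; ring

end Intertwining

lemma Gamma_add_int_add_one_ne_zero {l : ℂ} (h : ∀ n : ℤ, l ≠ (n : ℂ)) (n : ℤ) :
    Complex.Gamma (l + n + 1) ≠ 0 :=
  Complex.Gamma_ne_zero fun m hm => h (-n - 1 - m) (by push_cast; linear_combination hm)

lemma Gamma_add_int_add_one_succ {l : ℂ} (h : ∀ n : ℤ, l ≠ (n : ℂ)) (n : ℤ) :
    Complex.Gamma (l + ↑(n + 1) + 1) = (l + n + 1) * Complex.Gamma (l + n + 1) := by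
  rw [← Complex.Gamma_add_one _ fun h0 => h (-n - 1) (by push_cast; linear_combination h0)]
  push_cast
  ring_nf

/-- On the twist, `x` acts by `weylD l` and `∂` by `-weylX`. -/
theorem twist_U_iso (l : ℂ) (h : ∀ n : ℤ, l ≠ (n : ℂ)) :
    ∃ T : (ℤ →₀ ℂ) ≃ₗ[ℂ] (ℤ →₀ ℂ),
      (∀ v, T (weylD l v) = weylX (T v)) ∧
      (∀ v, T (-(weylX v)) = weylD (-l) (T v)) := by
  let c : ℤ → ℂˣ := fun n => Units.mk0 _ (Gamma_add_int_add_one_ne_zero h n)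
  have hc : ∀ n : ℤ, (c (n + 1) : ℂ) = (l + n + 1) * c n := Gamma_add_int_add_one_succ h
  refine ⟨weightedReflectionEquiv c, fun v => ?_, fun v => ?_⟩
  · exact LinearMap.congr_fun (weightedReflection_comp_weylD (c := fun n => c n) hc) v
  · exact LinearMap.congr_fun (weightedReflection_comp_neg_weylX (c := fun n => c n) hc) v
end

section
/- For r₁, r₂, s₁, s₂ ∈ ℂ with s₁ + s₂ ≠ 0, the tensor product of gl(1|1) Verma modules decomposes as 𝒱_{r₁,s₁} ⊗ 𝒱_{r₂,s₂} ≅ 𝒱_{r₁+r₂, s₁+s₂} ⊕ 𝒱_{r₁+r₂-1, s₁+s₂}. -/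
open TensorProduct

noncomputable section

/-- Actions on the Verma module `𝒱_{r,s}` of `gl(1|1)`, basis `v = e₀` (even),
`w = Ψ⁻v = e₁` (odd). -/
def vermaN (r : ℂ) : (Fin 2 → ℂ) →ₗ[ℂ] (Fin 2 → ℂ) :=
  Matrix.toLin' !![r, 0; 0, r - 1]

def vermaE (s : ℂ) : (Fin 2 → ℂ) →ₗ[ℂ] (Fin 2 → ℂ) :=
  Matrix.toLin' !![s, 0; 0, s]

def vermaPp (s : ℂ) : (Fin 2 → ℂ) →ₗ[ℂ] (Fin 2 → ℂ) :=
  Matrix.toLin' !![0, s; 0, 0]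

def vermaPm : (Fin 2 → ℂ) →ₗ[ℂ] (Fin 2 → ℂ) :=
  Matrix.toLin' !![(0 : ℂ), 0; 1, 0]

/-- The parity (sign) operator `(-1)^{|u|}` on `𝒱_{r,s}`: `v ↦ v`, `w ↦ -w`. -/
def vermaSign : (Fin 2 → ℂ) →ₗ[ℂ] (Fin 2 → ℂ) :=
  Matrix.toLin' !![(1 : ℂ), 0; 0, -1]

/-- Graded tensor action of an even element: `x·(u⊗v) = (xu)⊗v + u⊗(xv)`. -/
def evenOp (f g : (Fin 2 → ℂ) →ₗ[ℂ] (Fin 2 → ℂ)) :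
    ((Fin 2 → ℂ) ⊗[ℂ] (Fin 2 → ℂ)) →ₗ[ℂ] ((Fin 2 → ℂ) ⊗[ℂ] (Fin 2 → ℂ)) :=
  TensorProduct.map f LinearMap.id + TensorProduct.map LinearMap.id g

/-- Graded tensor action of an odd element:
`x·(u⊗v) = (xu)⊗v + (-1)^{|u|} u⊗(xv)`. -/
def oddOp (f g : (Fin 2 → ℂ) →ₗ[ℂ] (Fin 2 → ℂ)) :
    ((Fin 2 → ℂ) ⊗[ℂ] (Fin 2 → ℂ)) →ₗ[ℂ] ((Fin 2 → ℂ) ⊗[ℂ] (Fin 2 → ℂ)) :=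
  TensorProduct.map f LinearMap.id + TensorProduct.map vermaSign g


/-! `v ⊗ v` is a highest-weight vector of weight `(r₁ + r₂, s₁ + s₂)` with
`Ψ⁻(v ⊗ v) = v ⊗ w + w ⊗ v`, and `s₁ v ⊗ w - s₂ w ⊗ v` is one of weight
`(r₁ + r₂ - 1, s₁ + s₂)` (it is killed by `Ψ⁺`) with `Ψ⁻`-image `(s₁ + s₂) w ⊗ w`.
These four vectors form a basis of the tensor product exactly when `s₁ + s₂ ≠ 0`, so they
give an isomorphism `sumToTensor` from the direct sum; its inverse `tensorToSum` is written
out explicitly, and the intertwining relations are verified on it in coordinates. -/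

namespace Verma

def v : Fin 2 → ℂ := Pi.single 0 1

def w : Fin 2 → ℂ := Pi.single 1 1

lemma eq_smul_v_add_smul_w (u : Fin 2 → ℂ) : u = u 0 • v + u 1 • w := by
  funext i; fin_cases i <;> simp [v, w]

def tensorCoord (i j : Fin 2) : (Fin 2 → ℂ) ⊗[ℂ] (Fin 2 → ℂ) →ₗ[ℂ] ℂ :=
  TensorProduct.lid ℂ ℂ ∘ₗ TensorProduct.map (LinearMap.proj i) (LinearMap.proj j)

@[simp] lemma tensorCoord_tmul (i j : Fin 2) (u x : Fin 2 → ℂ) :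
    tensorCoord i j (u ⊗ₜ x) = u i * x j := by
  simp [tensorCoord]

@[simp] lemma vermaN_apply (r : ℂ) (u : Fin 2 → ℂ) :
    vermaN r u = ![r * u 0, (r - 1) * u 1] := by
  funext i; fin_cases i <;> simp [vermaN, Matrix.mulVec, dotProduct, Fin.sum_univ_two]

@[simp] lemma vermaE_apply (s : ℂ) (u : Fin 2 → ℂ) : vermaE s u = ![s * u 0, s * u 1] := by
  funext i; fin_cases i <;> simp [vermaE, Matrix.mulVec, dotProduct, Fin.sum_univ_two]

@[simp] lemma vermaPp_apply (s : ℂ) (u : Fin 2 → ℂ) : vermaPp s u = ![s * u 1, 0] := by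
  funext i; fin_cases i <;> simp [vermaPp, Matrix.mulVec, dotProduct, Fin.sum_univ_two]

@[simp] lemma vermaPm_apply (u : Fin 2 → ℂ) : vermaPm u = ![0, u 0] := by
  funext i; fin_cases i <;> simp [vermaPm, Matrix.mulVec, dotProduct, Fin.sum_univ_two]

@[simp] lemma vermaSign_apply (u : Fin 2 → ℂ) : vermaSign u = ![u 0, -u 1] := by
  funext i; fin_cases i <;> simp [vermaSign, Matrix.mulVec, dotProduct, Fin.sum_univ_two]

variable (s₁ s₂ : ℂ)

def sumToTensor : (Fin 2 → ℂ) × (Fin 2 → ℂ) →ₗ[ℂ] (Fin 2 → ℂ) ⊗[ℂ] (Fin 2 → ℂ) :=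
  (Fintype.linearCombination ℂ ![v ⊗ₜ v, v ⊗ₜ w + w ⊗ₜ v]).coprod
    (Fintype.linearCombination ℂ ![s₁ • v ⊗ₜ w - s₂ • w ⊗ₜ v, (s₁ + s₂) • w ⊗ₜ w])

def tensorToSum : (Fin 2 → ℂ) ⊗[ℂ] (Fin 2 → ℂ) →ₗ[ℂ] (Fin 2 → ℂ) × (Fin 2 → ℂ) :=
  (LinearMap.pi ![tensorCoord 0 0,
      (s₁ + s₂)⁻¹ • (s₂ • tensorCoord 0 1 + s₁ • tensorCoord 1 0)]).prod
    (LinearMap.pi ![(s₁ + s₂)⁻¹ • (tensorCoord 0 1 - tensorCoord 1 0),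
      (s₁ + s₂)⁻¹ • tensorCoord 1 1])

@[simp] lemma sumToTensor_apply (p q : Fin 2 → ℂ) :
    sumToTensor s₁ s₂ (p, q) = p 0 • v ⊗ₜ v + p 1 • (v ⊗ₜ w + w ⊗ₜ v)
        + (q 0 • (s₁ • v ⊗ₜ w - s₂ • w ⊗ₜ v) + q 1 • (s₁ + s₂) • w ⊗ₜ w) := by
  simp [sumToTensor, Fintype.linearCombination_apply, Fin.sum_univ_two]

@[simp] lemma tensorToSum_tmul (u x : Fin 2 → ℂ) :
    tensorToSum s₁ s₂ (u ⊗ₜ x)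
      = (![u 0 * x 0, (s₂ * (u 0 * x 1) + s₁ * (u 1 * x 0)) / (s₁ + s₂)],
         ![(u 0 * x 1 - u 1 * x 0) / (s₁ + s₂), u 1 * x 1 / (s₁ + s₂)]) := by
  ext i <;> fin_cases i <;> simp [tensorToSum] <;> ring

variable {s₁ s₂}

lemma tensorToSum_comp_sumToTensor (h : s₁ + s₂ ≠ 0) :
    tensorToSum s₁ s₂ ∘ₗ sumToTensor s₁ s₂ = LinearMap.id := by
  refine LinearMap.ext fun ⟨p, q⟩ => ?_
  ext i <;> fin_cases i <;> simp [v, w] <;> field_simp <;> ring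

lemma sumToTensor_comp_tensorToSum (h : s₁ + s₂ ≠ 0) :
    sumToTensor s₁ s₂ ∘ₗ tensorToSum s₁ s₂ = LinearMap.id := by
  refine TensorProduct.ext' fun u x => ?_
  rw [LinearMap.comp_apply, tensorToSum_tmul, sumToTensor_apply, LinearMap.id_apply]
  conv_rhs => rw [eq_smul_v_add_smul_w u, eq_smul_v_add_smul_w x]
  simp only [tmul_add, add_tmul, smul_tmul, tmul_smul, Matrix.cons_val_zero, Matrix.cons_val_one]
  match_scalars <;> field_simp <;> ring

lemma tensorToSum_comp_evenOp_vermaN (r₁ r₂ : ℂ) :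
    tensorToSum s₁ s₂ ∘ₗ evenOp (vermaN r₁) (vermaN r₂)
      = (vermaN (r₁ + r₂)).prodMap (vermaN (r₁ + r₂ - 1)) ∘ₗ tensorToSum s₁ s₂ := by
  refine TensorProduct.ext' fun u x => ?_
  ext i <;> fin_cases i <;> simp [evenOp] <;> ring

lemma tensorToSum_comp_evenOp_vermaE :
    tensorToSum s₁ s₂ ∘ₗ evenOp (vermaE s₁) (vermaE s₂)
      = (vermaE (s₁ + s₂)).prodMap (vermaE (s₁ + s₂)) ∘ₗ tensorToSum s₁ s₂ := by
  refine TensorProduct.ext' fun u x => ?_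
  ext i <;> fin_cases i <;> simp [evenOp] <;> ring

lemma tensorToSum_comp_oddOp_vermaPp (h : s₁ + s₂ ≠ 0) :
    tensorToSum s₁ s₂ ∘ₗ oddOp (vermaPp s₁) (vermaPp s₂)
      = (vermaPp (s₁ + s₂)).prodMap (vermaPp (s₁ + s₂)) ∘ₗ tensorToSum s₁ s₂ := by
  refine TensorProduct.ext' fun u x => ?_
  ext i <;> fin_cases i <;> simp [oddOp] <;> field_simp <;> ring

lemma tensorToSum_comp_oddOp_vermaPm (h : s₁ + s₂ ≠ 0) :
    tensorToSum s₁ s₂ ∘ₗ oddOp vermaPm vermaPm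
      = vermaPm.prodMap vermaPm ∘ₗ tensorToSum s₁ s₂ := by
  refine TensorProduct.ext' fun u x => ?_
  ext i <;> fin_cases i <;> simp [oddOp] <;> field_simp <;> ring

end Verma

open Verma

/-- `𝒱_{r₁,s₁} ⊗ 𝒱_{r₂,s₂} ≅ 𝒱_{r₁+r₂,s₁+s₂} ⊕ 𝒱_{r₁+r₂-1,s₁+s₂}` as
`gl(1|1)`-modules, when `s₁ + s₂ ≠ 0`. -/
theorem verma_tensor_decomposition (r₁ r₂ s₁ s₂ : ℂ) (h : s₁ + s₂ ≠ 0) :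
    ∃ T : ((Fin 2 → ℂ) ⊗[ℂ] (Fin 2 → ℂ)) ≃ₗ[ℂ] ((Fin 2 → ℂ) × (Fin 2 → ℂ)),
      ∀ u : (Fin 2 → ℂ) ⊗[ℂ] (Fin 2 → ℂ),
        T (evenOp (vermaN r₁) (vermaN r₂) u)
            = LinearMap.prodMap (vermaN (r₁ + r₂)) (vermaN (r₁ + r₂ - 1)) (T u) ∧
        T (evenOp (vermaE s₁) (vermaE s₂) u)
            = LinearMap.prodMap (vermaE (s₁ + s₂)) (vermaE (s₁ + s₂)) (T u) ∧
        T (oddOp (vermaPp s₁) (vermaPp s₂) u)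
            = LinearMap.prodMap (vermaPp (s₁ + s₂)) (vermaPp (s₁ + s₂)) (T u) ∧
        T (oddOp vermaPm vermaPm u)
            = LinearMap.prodMap vermaPm vermaPm (T u) :=
  ⟨.ofLinearMap _ _ (tensorToSum_comp_sumToTensor h) (sumToTensor_comp_tensorToSum h),
    fun u => ⟨LinearMap.congr_fun (tensorToSum_comp_evenOp_vermaN r₁ r₂) u,
      LinearMap.congr_fun tensorToSum_comp_evenOp_vermaE u,
      LinearMap.congr_fun (tensorToSum_comp_oddOp_vermaPp h) u,
      LinearMap.congr_fun (tensorToSum_comp_oddOp_vermaPm h) u⟩⟩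

end
end
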